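/- Let (φ_{j1,j2,j3}) be a family satisfying the genus-two Pieri rule with φ_{0,0,0} = 1. Then the family (φ_{j1,j2,j3})_{(j1,j2,j3)∈J} is a basis of H as a ℂ-vector space (it is linearly independent and spans H). -/

import Mathlib

/-!
Parametrize `J` by `ℕ³` via `(a, b, c) ↦ (a+b, a+c, b+c)` and measure the degree of a monomial
by `|m₁| + |m₂| + |m₃|`. Applying the Pieri rule at `(a+b, a+c, b+c)` with the unit direction that
raises `a`, `b` or `c`, the left side `(x + x⁻¹) φ` has top-degree part `m_{k+e}` (up to a scalar)
and the three other terms on the right have lower degree, while `K_{1,1} ≠ 0`. By induction on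
`a+b+c`, `φ_{(a+b,a+c,b+c)}` is therefore a nonzero multiple of the orbit sum `m_{(a,b,c)}` plus
lower-degree terms. So the family is triangular with respect to the monomial basis `(m_k)` of
`H`, and an invariant polynomial is determined by its coefficients at exponents in `ℕ³`.
-/

/-- A triple of integers is *admissible* if all entries are nonnegative,
the triangle inequality `|j1 - j2| ≤ j3 ≤ j1 + j2` holds, and `j1+j2+j3` is even. -/
def Admissible (j : ℤ × ℤ × ℤ) : Prop :=
  0 ≤ j.1 ∧ 0 ≤ j.2.1 ∧ 0 ≤ j.2.2 ∧
  |j.1 - j.2.1| ≤ j.2.2 ∧ j.2.2 ≤ j.1 + j.2.1 ∧ 2 ∣ (j.1 + j.2.1 + j.2.2)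

/-- Pieri coefficient `K_{a,b}(j1,j2,j3)` as a complex number. -/
noncomputable def Kc (a b j1 j2 j3 : ℤ) : ℂ :=
  ((a * b : ℤ) : ℂ) *
    (((a*j1 + b*j2 + j3 + a + b + 2 : ℤ) : ℂ) * ((a*j1 + b*j2 - j3 + a + b : ℤ) : ℂ)) /
    (4 * ((j1 : ℂ) + 1) * ((j2 : ℂ) + 1))

/-- Laurent polynomials in three variables, as finitely supported
coefficient functions on the exponent lattice `ℤ³`.  The coordinates of a
monomial `m` are the exponents of `x12`, `x13`, `x23` respectively. -/
abbrev LP := (ℤ × ℤ × ℤ) →₀ ℂ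

/-- Multiplication of a Laurent polynomial by the monomial `x^e`. -/
noncomputable def shiftLP (e : ℤ × ℤ × ℤ) (p : LP) : LP :=
  Finsupp.mapDomain (fun m => e + m) p

/-- Membership in `H`: invariance under each inversion `x_{ij} ↦ x_{ij}⁻¹`. -/
def InvariantH (p : LP) : Prop :=
  (∀ m : ℤ × ℤ × ℤ, p (-m.1, m.2.1, m.2.2) = p m) ∧
  (∀ m : ℤ × ℤ × ℤ, p (m.1, -m.2.1, m.2.2) = p m) ∧
  (∀ m : ℤ × ℤ × ℤ, p (m.1, m.2.1, -m.2.2) = p m)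

/-- A family `φ` (defined for all integer triples, vanishing on non-admissible ones,
with values in `H`) satisfies the genus-two Pieri rule with `φ_{0,0,0} = 1`. -/
structure IsPieriFamily (φ : ℤ × ℤ × ℤ → LP) : Prop where
  zero_of_not_admissible : ∀ j, ¬ Admissible j → φ j = 0
  mem_H : ∀ j, InvariantH (φ j)
  init : φ (0, 0, 0) = Finsupp.single (0, 0, 0) 1
  pieri12 : ∀ j1 j2 j3 : ℤ, Admissible (j1, j2, j3) →
    shiftLP (1, 0, 0) (φ (j1, j2, j3)) + shiftLP (-1, 0, 0) (φ (j1, j2, j3)) =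
      Kc 1 1 j1 j2 j3 • φ (j1+1, j2+1, j3) + Kc 1 (-1) j1 j2 j3 • φ (j1+1, j2-1, j3) +
      Kc (-1) 1 j1 j2 j3 • φ (j1-1, j2+1, j3) + Kc (-1) (-1) j1 j2 j3 • φ (j1-1, j2-1, j3)
  pieri13 : ∀ j1 j2 j3 : ℤ, Admissible (j1, j2, j3) →
    shiftLP (0, 1, 0) (φ (j1, j2, j3)) + shiftLP (0, -1, 0) (φ (j1, j2, j3)) =
      Kc 1 1 j1 j3 j2 • φ (j1+1, j2, j3+1) + Kc 1 (-1) j1 j3 j2 • φ (j1+1, j2, j3-1) +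
      Kc (-1) 1 j1 j3 j2 • φ (j1-1, j2, j3+1) + Kc (-1) (-1) j1 j3 j2 • φ (j1-1, j2, j3-1)
  pieri23 : ∀ j1 j2 j3 : ℤ, Admissible (j1, j2, j3) →
    shiftLP (0, 0, 1) (φ (j1, j2, j3)) + shiftLP (0, 0, -1) (φ (j1, j2, j3)) =
      Kc 1 1 j2 j3 j1 • φ (j1, j2+1, j3+1) + Kc 1 (-1) j2 j3 j1 • φ (j1, j2+1, j3-1) +
      Kc (-1) 1 j2 j3 j1 • φ (j1, j2-1, j3+1) + Kc (-1) (-1) j2 j3 j1 • φ (j1, j2-1, j3-1)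

def natAbs3 (m : ℤ × ℤ × ℤ) : ℕ × ℕ × ℕ := (m.1.natAbs, m.2.1.natAbs, m.2.2.natAbs)

def natCast3 (k : ℕ × ℕ × ℕ) : ℤ × ℤ × ℤ := (k.1, k.2.1, k.2.2)

def totalDeg (k : ℕ × ℕ × ℕ) : ℕ := k.1 + k.2.1 + k.2.2

/-- The admissible triple `(a+b, a+c, b+c)`; the leading monomial of `φ` at it is
`x12^a x13^b x23^c`. -/
def admTriple (k : ℕ × ℕ × ℕ) : ℤ × ℤ × ℤ := (k.1 + k.2.1, k.1 + k.2.2, k.2.1 + k.2.2)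

lemma natAbs3_natCast3 (k : ℕ × ℕ × ℕ) : natAbs3 (natCast3 k) = k := rfl

lemma natCast3_injective : Function.Injective natCast3 :=
  Function.LeftInverse.injective natAbs3_natCast3

lemma totalDeg_eq_one_iff {e : ℕ × ℕ × ℕ} :
    totalDeg e = 1 ↔ e = (1, 0, 0) ∨ e = (0, 1, 0) ∨ e = (0, 0, 1) := by
  obtain ⟨e₁, e₂, e₃⟩ := e
  simp only [totalDeg, Prod.mk.injEq]
  omega

lemma exists_add_of_ne_zero {k : ℕ × ℕ × ℕ} (hk : k ≠ 0) :
    ∃ k' e : ℕ × ℕ × ℕ, totalDeg e = 1 ∧ k = k' + e := by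
  obtain ⟨a, b, c⟩ := k
  rcases a with _ | a
  · rcases b with _ | b
    · rcases c with _ | c
      · exact absurd rfl hk
      · exact ⟨(0, 0, c), (0, 0, 1), rfl, rfl⟩
    · exact ⟨(0, b, c), (0, 1, 0), rfl, rfl⟩
  · exact ⟨(a, b, c), (1, 0, 0), rfl, rfl⟩

lemma admissible_admTriple (k : ℕ × ℕ × ℕ) : Admissible (admTriple k) := by
  simp only [Admissible, admTriple, abs_le]
  omega

lemma admTriple_add (k l : ℕ × ℕ × ℕ) : admTriple (k + l) = admTriple k + admTriple l := by
  simp only [admTriple, Prod.fst_add, Prod.snd_add, Nat.cast_add, Prod.mk_add_mk]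
  ring_nf

lemma admTriple_injective : Function.Injective admTriple := by
  rintro ⟨a, b, c⟩ ⟨a', b', c'⟩ h
  simp only [admTriple, Prod.mk.injEq] at h ⊢
  omega

lemma exists_admTriple_eq {j : ℤ × ℤ × ℤ} (hj : Admissible j) : ∃ k, admTriple k = j := by
  obtain ⟨j₁, j₂, j₃⟩ := j
  simp only [Admissible, abs_le] at hj
  refine ⟨(((j₁ + j₂ - j₃) / 2).toNat, ((j₁ - j₂ + j₃) / 2).toNat, ((j₂ + j₃ - j₁) / 2).toNat), ?_⟩
  simp only [admTriple, Prod.mk.injEq]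
  omega

noncomputable def admTripleEquiv : ℕ × ℕ × ℕ ≃ {j : ℤ × ℤ × ℤ // Admissible j} :=
  Equiv.ofBijective (fun k => ⟨admTriple k, admissible_admTriple k⟩)
    ⟨fun _ _ h => admTriple_injective (congrArg Subtype.val h),
      fun j => (exists_admTriple_eq j.2).imp fun _ hk => Subtype.ext hk⟩

abbrev degreeLE (n : ℕ) : Submodule ℂ LP :=
  Finsupp.supported ℂ ℂ {m | totalDeg (natAbs3 m) ≤ n}

/-- In degrees `≥ |k|`, `p` agrees with `c • m_k`, where `m_k = Σ x^(±k₁, ±k₂, ±k₃)` is the orbit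
sum of `x^k` under the sign changes. -/
def HasLeadingTerm (p : LP) (k : ℕ × ℕ × ℕ) (c : ℂ) : Prop :=
  ∀ m, totalDeg k ≤ totalDeg (natAbs3 m) → p m = if natAbs3 m = k then c else 0

lemma HasLeadingTerm.mem_degreeLE {p : LP} {k : ℕ × ℕ × ℕ} {c : ℂ}
    (h : HasLeadingTerm p k c) : p ∈ degreeLE (totalDeg k) := by
  rw [Finsupp.mem_supported']
  intro m hm
  simp only [Set.mem_ofPred_eq, not_le] at hm
  rw [h m hm.le, if_neg (by rintro rfl; exact hm.false)]

lemma HasLeadingTerm.apply_natCast3 {p : LP} {k : ℕ × ℕ × ℕ} {c : ℂ} (h : HasLeadingTerm p k c)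
    {l : ℕ × ℕ × ℕ} (hl : totalDeg k ≤ totalDeg l) : p (natCast3 l) = if l = k then c else 0 :=
  h (natCast3 l) hl

lemma hasLeadingTerm_single_zero : HasLeadingTerm (Finsupp.single 0 1) 0 1 := by
  intro m _
  obtain ⟨m₁, m₂, m₃⟩ := m
  simp only [Finsupp.single_apply, natAbs3, Prod.zero_eq_mk, Prod.mk.injEq, Int.natAbs_eq_zero,
    @eq_comm ℤ 0]

lemma shiftLP_apply (e : ℤ × ℤ × ℤ) (p : LP) (m : ℤ × ℤ × ℤ) :
    shiftLP e p m = p (m - e) := by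
  simpa [shiftLP] using Finsupp.mapDomain_apply (add_right_injective e) p (m - e)

/-- Coefficientwise form of `x^e · m_k + x^(-e) · m_k = m_(k+e) + (terms of degree ≤ |k|)` for the
orbit sums `m_k = Σ x^(±k₁, ±k₂, ±k₃)` and a unit vector `e`. -/
lemma ite_natAbs3_sub_add_ite_natAbs3_add {k e : ℕ × ℕ × ℕ} {m : ℤ × ℤ × ℤ} (c : ℂ)
    (he : totalDeg e = 1) (hm : totalDeg k < totalDeg (natAbs3 m)) :
    ((if natAbs3 (m - natCast3 e) = k then c else 0) +
      if natAbs3 (m + natCast3 e) = k then c else 0) =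
      if natAbs3 m = k + e then c else 0 := by
  obtain ⟨k₁, k₂, k₃⟩ := k
  obtain ⟨m₁, m₂, m₃⟩ := m
  rcases totalDeg_eq_one_iff.1 he with rfl | rfl | rfl <;>
    simp only [totalDeg, natAbs3, natCast3, Prod.mk_sub_mk, Prod.mk_add_mk, Prod.mk.injEq,
      Nat.cast_zero, Nat.cast_one, sub_zero, add_zero] at hm ⊢ <;>
    split_ifs <;> first | omega | simp

lemma HasLeadingTerm.of_shift_add_shift {p q r : LP} {k e : ℕ × ℕ × ℕ} {c K : ℂ}
    (he : totalDeg e = 1) (hK : K ≠ 0) (hp : HasLeadingTerm p k c)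
    (hr : r ∈ degreeLE (totalDeg k))
    (h : shiftLP (natCast3 e) p + shiftLP (-natCast3 e) p = K • q + r) :
    HasLeadingTerm q (k + e) (c / K) := by
  intro m hm
  have hmk : totalDeg k < totalDeg (natAbs3 m) := by
    simp only [totalDeg, Prod.fst_add, Prod.snd_add] at hm he ⊢; omega
  have hcoeff := DFunLike.congr_fun h m
  simp only [Finsupp.add_apply, Finsupp.smul_apply, smul_eq_mul, shiftLP_apply, sub_neg_eq_add,
    (Finsupp.mem_supported' _ _).1 hr m (by simpa using hmk), add_zero] at hcoeff
  have hdeg : totalDeg k ≤ totalDeg (natAbs3 (m - natCast3 e)) ∧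
      totalDeg k ≤ totalDeg (natAbs3 (m + natCast3 e)) := by
    obtain ⟨m₁, m₂, m₃⟩ := m
    rcases totalDeg_eq_one_iff.1 he with rfl | rfl | rfl <;>
      simp only [totalDeg, natAbs3, natCast3, Prod.mk_sub_mk, Prod.mk_add_mk, Nat.cast_zero,
        Nat.cast_one, sub_zero, add_zero] at hmk ⊢ <;> omega
  rw [hp _ hdeg.1, hp _ hdeg.2, ite_natAbs3_sub_add_ite_natAbs3_add c he hmk] at hcoeff
  rw [← inv_mul_cancel_left₀ hK (q m), ← hcoeff]
  split_ifs <;> simp [div_eq_inv_mul]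

lemma Kc_one_one_ne_zero {j₁ j₂ j₃ : ℤ} (h₁ : 0 ≤ j₁) (h₂ : 0 ≤ j₂) (h₃ : 0 ≤ j₃)
    (h : j₃ ≤ j₁ + j₂) : Kc 1 1 j₁ j₂ j₃ ≠ 0 := by
  have hA : ((1 * j₁ + 1 * j₂ + j₃ + 1 + 1 + 2 : ℤ) : ℂ) ≠ 0 := Int.cast_ne_zero.2 (by omega)
  have hB : ((1 * j₁ + 1 * j₂ - j₃ + 1 + 1 : ℤ) : ℂ) ≠ 0 := Int.cast_ne_zero.2 (by omega)
  have h₁' : (j₁ : ℂ) + 1 ≠ 0 := by exact_mod_cast (show j₁ + 1 ≠ 0 by omega)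
  have h₂' : (j₂ : ℂ) + 1 ≠ 0 := by exact_mod_cast (show j₂ + 1 ≠ 0 by omega)
  unfold Kc
  exact div_ne_zero (mul_ne_zero (by norm_num) (mul_ne_zero hA hB)) (by simp [h₁', h₂'])

lemma exists_smul_add_mem_of_eq_sum {R M : Type*} [Semiring R] [AddCommMonoid M] [Module R M]
    {S : Submodule R M} {X p₁ p₂ p₃ p₄ : M} {K₁ K₂ K₃ K₄ : R}
    (h : X = K₁ • p₁ + K₂ • p₂ + K₃ • p₃ + K₄ • p₄) (hK : K₁ ≠ 0)
    (h₂ : p₂ ∈ S) (h₃ : p₃ ∈ S) (h₄ : p₄ ∈ S) : ∃ K : R, K ≠ 0 ∧ ∃ r ∈ S, X = K • p₁ + r :=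
  ⟨K₁, hK, _, add_mem (add_mem (S.smul_mem K₂ h₂) (S.smul_mem K₃ h₃)) (S.smul_mem K₄ h₄),
    by rw [h]; abel⟩

lemma IsPieriFamily.exists_shift_add_shift {φ : ℤ × ℤ × ℤ → LP} (hφ : IsPieriFamily φ)
    {k e : ℕ × ℕ × ℕ} (he : totalDeg e = 1)
    (hlow : ∀ j : ℤ × ℤ × ℤ, j.1 + j.2.1 + j.2.2 ≤ 2 * totalDeg k → φ j ∈ degreeLE (totalDeg k)) :
    ∃ K : ℂ, K ≠ 0 ∧ ∃ r ∈ degreeLE (totalDeg k),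
      shiftLP (natCast3 e) (φ (admTriple k)) + shiftLP (-natCast3 e) (φ (admTriple k)) =
        K • φ (admTriple (k + e)) + r := by
  have hadm := admissible_admTriple k
  rw [admTriple_add]
  obtain ⟨a, b, c⟩ := k
  simp only [totalDeg, admTriple] at hlow hadm ⊢
  rcases totalDeg_eq_one_iff.1 he with rfl | rfl | rfl <;>
    simp only [natCast3, Prod.mk_add_mk, Prod.neg_mk, Nat.cast_zero, Nat.cast_one,
      add_zero, zero_add, neg_zero]
  · exact exists_smul_add_mem_of_eq_sum (hφ.pieri12 _ _ _ hadm)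
      (Kc_one_one_ne_zero (by omega) (by omega) (by omega) (by omega))
      (hlow _ (by dsimp only; omega)) (hlow _ (by dsimp only; omega)) (hlow _ (by dsimp only; omega))
  · exact exists_smul_add_mem_of_eq_sum (hφ.pieri13 _ _ _ hadm)
      (Kc_one_one_ne_zero (by omega) (by omega) (by omega) (by omega))
      (hlow _ (by dsimp only; omega)) (hlow _ (by dsimp only; omega)) (hlow _ (by dsimp only; omega))
  · exact exists_smul_add_mem_of_eq_sum (hφ.pieri23 _ _ _ hadm)
      (Kc_one_one_ne_zero (by omega) (by omega) (by omega) (by omega))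
      (hlow _ (by dsimp only; omega)) (hlow _ (by dsimp only; omega)) (hlow _ (by dsimp only; omega))

lemma IsPieriFamily.mem_degreeLE_of_sum_le {φ : ℤ × ℤ × ℤ → LP} (hφ : IsPieriFamily φ) {n : ℕ}
    (hlead : ∀ l, totalDeg l ≤ n → ∃ c, HasLeadingTerm (φ (admTriple l)) l c)
    {j : ℤ × ℤ × ℤ} (hj : j.1 + j.2.1 + j.2.2 ≤ 2 * n) : φ j ∈ degreeLE n := by
  by_cases hadm : Admissible j
  · obtain ⟨l, rfl⟩ := exists_admTriple_eq hadm
    have hl : totalDeg l ≤ n := by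
      simp only [admTriple, totalDeg] at hj ⊢; omega
    obtain ⟨_, hl'⟩ := hlead l hl
    exact Finsupp.supported_mono (fun m hm => le_trans hm hl) hl'.mem_degreeLE
  · rw [hφ.zero_of_not_admissible j hadm]
    exact zero_mem _

theorem IsPieriFamily.exists_hasLeadingTerm {φ : ℤ × ℤ × ℤ → LP} (hφ : IsPieriFamily φ)
    (k : ℕ × ℕ × ℕ) : ∃ c : ℂ, c ≠ 0 ∧ HasLeadingTerm (φ (admTriple k)) k c := by
  induction hn : totalDeg k using Nat.strong_induction_on generalizing k with
  | _ n ih =>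
  rcases eq_or_ne k 0 with rfl | hk
  · exact ⟨1, one_ne_zero, hφ.init ▸ hasLeadingTerm_single_zero⟩
  obtain ⟨k, e, he, rfl⟩ := exists_add_of_ne_zero hk
  have hlt : totalDeg k < n := by
    subst hn; simp only [totalDeg, Prod.fst_add, Prod.snd_add] at he ⊢; omega
  obtain ⟨c, hc, hk⟩ := ih _ hlt k rfl
  obtain ⟨K, hK, r, hr, hrel⟩ := hφ.exists_shift_add_shift he fun _ =>
    hφ.mem_degreeLE_of_sum_le fun l hl => (ih _ (hl.trans_lt hlt) l rfl).imp fun _ h => h.2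
  exact ⟨c / K, div_ne_zero hc hK, hk.of_shift_add_shift he hK hr hrel⟩

section Triangular

variable {𝕜 ι : Type*} [Field 𝕜] {ψ : ι → ι →₀ 𝕜} (d : ι → ℕ)

theorem linearIndependent_of_triangular (hdiag : ∀ i, ψ i i ≠ 0)
    (htri : ∀ i j, ψ i j ≠ 0 → j = i ∨ d j < d i) : LinearIndependent 𝕜 ψ := by
  classical
  rw [linearIndependent_iff']
  intro s g hsum i hi
  by_contra hgi
  obtain ⟨i₀, hi₀, hmax⟩ :=
    (s.filter (g · ≠ 0)).exists_max_image d ⟨i, Finset.mem_filter.2 ⟨hi, hgi⟩⟩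
  rw [Finset.mem_filter] at hi₀
  have hcoeff : ∑ j ∈ s, g j * ψ j i₀ = 0 := by
    simpa using DFunLike.congr_fun hsum i₀
  rw [Finset.sum_eq_single i₀ ?_ (absurd hi₀.1)] at hcoeff
  · exact mul_ne_zero hi₀.2 (hdiag i₀) hcoeff
  intro j hj hji
  by_cases hgj : g j = 0
  · rw [hgj, zero_mul]
  have hle := hmax j (Finset.mem_filter.2 ⟨hj, hgj⟩)
  have hψ : ψ j i₀ = 0 := by
    by_contra hne
    rcases htri j i₀ hne with h | h
    · exact hji h.symm
    · omega
  rw [hψ, mul_zero]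

theorem single_one_mem_span_of_triangular (hdiag : ∀ i, ψ i i ≠ 0)
    (htri : ∀ i j, ψ i j ≠ 0 → j = i ∨ d j < d i) (i : ι) :
    Finsupp.single i 1 ∈ Submodule.span 𝕜 (Set.range ψ) := by
  classical
  induction hn : d i using Nat.strong_induction_on generalizing i with
  | _ n ih =>
  have hlower : ∀ j ∈ (ψ i).support.erase i,
      Finsupp.single j 1 ∈ Submodule.span 𝕜 (Set.range ψ) := by
    intro j hj
    obtain ⟨hji, hj⟩ := Finset.mem_erase.1 hj
    exact ih _ (hn ▸ ((htri i j (Finsupp.mem_support_iff.1 hj)).resolve_left hji)) j rfl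
  have hdecomp : ψ i = ψ i i • Finsupp.single i 1 +
      ∑ j ∈ (ψ i).support.erase i, ψ i j • Finsupp.single j 1 := by
    simp only [Finsupp.smul_single_one]
    rw [Finset.add_sum_erase _ (fun j => Finsupp.single j (ψ i j))
      (Finsupp.mem_support_iff.2 (hdiag i))]
    exact (Finsupp.sum_single (ψ i)).symm
  have hsingle : Finsupp.single i 1 = (ψ i i)⁻¹ •
      (ψ i - ∑ j ∈ (ψ i).support.erase i, ψ i j • Finsupp.single j 1) := by
    rw [sub_eq_of_eq_add hdecomp, inv_smul_smul₀ (hdiag i)]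
  rw [hsingle]
  exact Submodule.smul_mem _ _ (Submodule.sub_mem _ (Submodule.subset_span ⟨i, rfl⟩)
    (Submodule.sum_mem _ fun j hj => Submodule.smul_mem _ _ (hlower j hj)))

theorem span_eq_top_of_triangular (hdiag : ∀ i, ψ i i ≠ 0)
    (htri : ∀ i j, ψ i j ≠ 0 → j = i ∨ d j < d i) :
    Submodule.span 𝕜 (Set.range ψ) = ⊤ := by
  rw [eq_top_iff, ← Finsupp.basisSingleOne.span_eq, Submodule.span_le, Finsupp.coe_basisSingleOne]
  rintro _ ⟨i, rfl⟩
  exact single_one_mem_span_of_triangular d hdiag htri i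

end Triangular

/-- Restriction to the exponents in `ℕ³`; it is injective on `H`, since an invariant Laurent
polynomial has the same coefficient at `m` and at `natAbs3 m`. -/
noncomputable def restrictNat : LP →ₗ[ℂ] (ℕ × ℕ × ℕ →₀ ℂ) :=
  Finsupp.lcomapDomain natCast3 natCast3_injective

lemma restrictNat_apply (p : LP) (k : ℕ × ℕ × ℕ) : restrictNat p k = p (natCast3 k) := rfl

def invariantSubmodule : Submodule ℂ LP where
  carrier := {p | InvariantH p}
  add_mem' := fun ⟨p₁, p₂, p₃⟩ ⟨q₁, q₂, q₃⟩ =>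
    ⟨fun m => by simp [p₁ m, q₁ m], fun m => by simp [p₂ m, q₂ m], fun m => by simp [p₃ m, q₃ m]⟩
  zero_mem' := ⟨fun _ => rfl, fun _ => rfl, fun _ => rfl⟩
  smul_mem' := fun c _ ⟨p₁, p₂, p₃⟩ =>
    ⟨fun m => by simp [p₁ m], fun m => by simp [p₂ m], fun m => by simp [p₃ m]⟩

lemma InvariantH.apply_natCast3_natAbs3 {p : LP} (hp : InvariantH p) (m : ℤ × ℤ × ℤ) :
    p (natCast3 (natAbs3 m)) = p m := by
  have h₁ (x y z : ℤ) : p (|x|, y, z) = p (x, y, z) := by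
    rcases abs_choice x with h | h <;> rw [h]; exact hp.1 (x, y, z)
  have h₂ (x y z : ℤ) : p (x, |y|, z) = p (x, y, z) := by
    rcases abs_choice y with h | h <;> rw [h]; exact hp.2.1 (x, y, z)
  have h₃ (x y z : ℤ) : p (x, y, |z|) = p (x, y, z) := by
    rcases abs_choice z with h | h <;> rw [h]; exact hp.2.2 (x, y, z)
  simp only [natCast3, natAbs3, Int.natCast_natAbs]
  rw [h₁, h₂, h₃]

lemma InvariantH.eq_zero_of_restrictNat_eq_zero {p : LP} (hp : InvariantH p)
    (h : restrictNat p = 0) : p = 0 := by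
  ext m
  rw [← hp.apply_natCast3_natAbs3, ← restrictNat_apply, h, Finsupp.zero_apply, Finsupp.zero_apply]

theorem linearIndependent_and_span_eq_of_restrictNat {ι : Type*} {v : ι → LP}
    (hv : ∀ i, InvariantH (v i)) (hli : LinearIndependent ℂ (restrictNat ∘ v))
    (hspan : Submodule.span ℂ (Set.range (restrictNat ∘ v)) = ⊤) :
    LinearIndependent ℂ v ∧ (Submodule.span ℂ (Set.range v) : Set LP) = {p | InvariantH p} := by
  have hle : Submodule.span ℂ (Set.range v) ≤ invariantSubmodule :=
    Submodule.span_le.2 (Set.range_subset_iff.2 hv)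
  refine ⟨hli.of_comp, Set.Subset.antisymm hle fun p hp => ?_⟩
  have hmem : restrictNat p ∈ (Submodule.span ℂ (Set.range v)).map restrictNat := by
    rw [← Submodule.span_image, ← Set.range_comp, hspan]
    trivial
  obtain ⟨q, hq, hpq⟩ := hmem
  have hdiff : InvariantH (p - q) := invariantSubmodule.sub_mem hp (hle hq)
  rw [sub_eq_zero.1 (hdiff.eq_zero_of_restrictNat_eq_zero (by rw [map_sub, hpq, sub_self]))]
  exact hq

/-- For a family satisfying the genus-two Pieri rule with
`φ_{0,0,0} = 1`, the family `(φ_j)_{j ∈ J}` indexed by the admissible triples is a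
basis of `H` as a `ℂ`-vector space: it is linearly independent and its span is
exactly the set of invariant Laurent polynomials. -/
theorem genus_two_pieri_basis (φ : ℤ × ℤ × ℤ → LP) (hφ : IsPieriFamily φ) :
    LinearIndependent ℂ (fun j : {j : ℤ × ℤ × ℤ // Admissible j} => φ j.1) ∧
    (Submodule.span ℂ (Set.range fun j : {j : ℤ × ℤ × ℤ // Admissible j} => φ j.1) :
        Set LP) = {p : LP | InvariantH p} := by
  choose c hc hlead using hφ.exists_hasLeadingTerm
  set v : ℕ × ℕ × ℕ → LP := fun k => φ (admTriple k)
  have hdiag : ∀ k, restrictNat (v k) k ≠ 0 := fun k => by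
    rw [restrictNat_apply, (hlead k).apply_natCast3 le_rfl, if_pos rfl]
    exact hc k
  have htri : ∀ k l, restrictNat (v k) l ≠ 0 → l = k ∨ totalDeg l < totalDeg k := by
    intro k l hkl
    by_contra! h
    rw [restrictNat_apply, (hlead k).apply_natCast3 h.2, if_neg h.1] at hkl
    exact hkl rfl
  obtain ⟨hli, hspan⟩ := linearIndependent_and_span_eq_of_restrictNat (fun k => hφ.mem_H _)
    (linearIndependent_of_triangular totalDeg hdiag htri)
    (span_eq_top_of_triangular totalDeg hdiag htri)
  have hreindex : (fun j : {j : ℤ × ℤ × ℤ // Admissible j} => φ j.1) = v ∘ admTripleEquiv.symm := by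
    funext j
    exact congrArg (fun j => φ j.1) (admTripleEquiv.apply_symm_apply j).symm
  rw [hreindex, EquivLike.range_comp]
  exact ⟨hli.comp _ admTripleEquiv.symm.injective, hspan⟩
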